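/- Fix m ≥ 1 and block sizes n : Fin m → ℕ with n k ≥ 1, let ι := Σ k, Fin (n k), and let p : ι → ℝ satisfy p x ≥ 0 for all x. Define q : ι → ℝ by q⟨k,i⟩ := (∑_{j : Fin (n k)} p⟨k,j⟩) / (n k). Then ∑_{x : ι} negMulLog(q x) = ∑_{x : ι} negMulLog(p x) if and only if for every k and all i, j : Fin (n k) one has p⟨k,i⟩ = p⟨k,j⟩; that is, equality of the block-averaged entropy with the original entropy holds exactly when p is constant on each block. -/

import Mathlib

/-!
Within each block, Jensen's inequality for the strictly concave `negMulLog` (uniform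
weights) gives `∑ᵢ η(pᵢ) ≤ n · η(average)`, with equality iff the block is constant.
Summing over blocks, the total is an equality iff every block's inequality is.
-/

open Finset

section Jensen

variable {ι : Type*} [Fintype ι] {s : Set ℝ} {g : ℝ → ℝ} {f : ι → ℝ}

lemma sum_inv_card_smul_eq_div_card (f : ι → ℝ) :
    ∑ i, (Fintype.card ι : ℝ)⁻¹ • f i = (∑ i, f i) / Fintype.card ι := by
  rw [← smul_sum, smul_eq_mul, inv_mul_eq_div]

lemma ConcaveOn.sum_map_le_card_mul_map_average (hg : ConcaveOn ℝ s g) (hf : ∀ i, f i ∈ s) :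
    ∑ i, g (f i) ≤ Fintype.card ι * g ((∑ i, f i) / Fintype.card ι) := by
  cases isEmpty_or_nonempty ι
  · simp
  have hcard : (0 : ℝ) < Fintype.card ι := by exact_mod_cast Fintype.card_pos
  have jensen := hg.le_map_sum (t := univ) (fun _ _ ↦ inv_nonneg.2 hcard.le) (by simp)
    (fun i _ ↦ hf i)
  rwa [sum_inv_card_smul_eq_div_card, sum_inv_card_smul_eq_div_card, div_le_iff₀' hcard]
    at jensen

lemma StrictConcaveOn.card_mul_map_average_eq_sum_map_iff (hg : StrictConcaveOn ℝ s g)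
    (hf : ∀ i, f i ∈ s) :
    Fintype.card ι * g ((∑ i, f i) / Fintype.card ι) = ∑ i, g (f i) ↔
      ∀ i j, f i = f j := by
  cases isEmpty_or_nonempty ι
  · simp
  have hcard : (0 : ℝ) < Fintype.card ι := by exact_mod_cast Fintype.card_pos
  have jensen := hg.map_sum_eq_iff_of_pos (t := univ) (fun _ _ ↦ inv_pos.2 hcard)
    (by simp) (fun i _ ↦ hf i)
  rw [sum_inv_card_smul_eq_div_card, sum_inv_card_smul_eq_div_card, eq_div_iff hcard.ne',
    mul_comm] at jensen
  simpa using jensen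

end Jensen

theorem blockAverage_entropy_eq_iff (m : ℕ) (n : Fin m → ℕ)
    (p : (Σ k, Fin (n k)) → ℝ) (hp : ∀ x, 0 ≤ p x) :
    (∑ x : Σ k, Fin (n k),
        Real.negMulLog ((∑ j : Fin (n x.1), p ⟨x.1, j⟩) / (n x.1 : ℝ)))
      = (∑ x : Σ k, Fin (n k), Real.negMulLog (p x))
      ↔ ∀ (k : Fin m) (i j : Fin (n k)), p ⟨k, i⟩ = p ⟨k, j⟩ := by
  have hblock (k : Fin m) : ∀ i, p ⟨k, i⟩ ∈ Set.Ici 0 := fun i ↦ hp ⟨k, i⟩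
  have hle (k : Fin m) (_ : k ∈ univ) :
      ∑ i, Real.negMulLog (p ⟨k, i⟩)
        ≤ ∑ _i : Fin (n k), Real.negMulLog ((∑ j, p ⟨k, j⟩) / n k) := by
    simpa using Real.concaveOn_negMulLog.sum_map_le_card_mul_map_average (hblock k)
  rw [Fintype.sum_sigma, Fintype.sum_sigma, eq_comm, sum_eq_sum_iff_of_le hle]
  simp only [mem_univ, forall_const]
  refine forall_congr' fun k ↦ ?_
  simpa [eq_comm] using
    Real.strictConcaveOn_negMulLog.card_mul_map_average_eq_sum_map_iff (hblock k)
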